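/- An infinite word s over a finite alphabet A is a standard Arnoux-Rauzy sequence (A-strict standard episturmian word) if and only if for every letter a ∈ A and every total order on A in which a is the minimal letter, a·s = min(s). -/

import Mathlib

/-- The prefix of length `k` of an infinite word `w : ℕ → A`. -/
def pref {A : Type*} (w : ℕ → A) (k : ℕ) : List A := (List.range k).map w

/-- `u` is a (finite) factor of the infinite word `w`. -/
def IsFactor {A : Type*} (w : ℕ → A) (u : List A) : Prop :=
  ∃ i : ℕ, u = (List.range u.length).map (fun j => w (i + j))

/-- Prepend a letter to an infinite word. -/
def consW {A : Type*} (a : A) (s : ℕ → A) : ℕ → A := fun n => match n with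
  | 0 => a
  | n + 1 => s n

/-- Concatenation of a finite word with an infinite word. -/
def catW {A : Type*} (u : List A) (w : ℕ → A) : ℕ → A := fun n =>
  if h : n < u.length then u.get ⟨n, h⟩ else w (n - u.length)

/-- `u` is the lexicographically smallest factor of `w` of length `k`,
w.r.t. the strict order `lt` on letters. -/
def IsMinFactor {A : Type*} (lt : A → A → Prop) (w : ℕ → A) (k : ℕ) (u : List A) : Prop :=
  IsFactor w u ∧ u.length = k ∧
    ∀ v, IsFactor w v → v.length = k → u = v ∨ List.Lex lt u v

/-- `u` is the lexicographically greatest factor of `w` of length `k`. -/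
def IsMaxFactor {A : Type*} (lt : A → A → Prop) (w : ℕ → A) (k : ℕ) (u : List A) : Prop :=
  IsFactor w u ∧ u.length = k ∧
    ∀ v, IsFactor w v → v.length = k → u = v ∨ List.Lex lt v u

/-- `m = min(w)`: every length-`k` prefix of `m` is the lexicographically
smallest factor of `w` of length `k`. -/
def IsMinWord {A : Type*} (lt : A → A → Prop) (w m : ℕ → A) : Prop :=
  ∀ k : ℕ, IsMinFactor lt w k (pref m k)

/-- `m = max(w)`. -/
def IsMaxWord {A : Type*} (lt : A → A → Prop) (w m : ℕ → A) : Prop :=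
  ∀ k : ℕ, IsMaxFactor lt w k (pref m k)

/-- The letter `z` is separating for `t`: every length-2 factor of `t` contains `z`. -/
def Separating {A : Type*} (z : A) (t : ℕ → A) : Prop :=
  ∀ u, IsFactor t u → u.length = 2 → z ∈ u

/-- The episturmian morphism `Ψ_z` on finite words: `z ↦ z`, `x ↦ zx` for `x ≠ z`. -/
def psiL {A : Type*} [DecidableEq A] (z : A) (u : List A) : List A :=
  u.flatMap (fun x => if x = z then [z] else [z, x])

/-- `t = Ψ_z(y)` for infinite words: the `Ψ_z`-image of every prefix of `y`
is a prefix of `t`. -/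
def PsiImage {A : Type*} [DecidableEq A] (z : A) (y t : ℕ → A) : Prop :=
  ∀ n : ℕ, psiL z (pref y n) = pref t (psiL z (pref y n)).length

/-- `u` is a left special factor of `w`. -/
def LeftSpecial {A : Type*} (w : ℕ → A) (u : List A) : Prop :=
  ∃ a b : A, a ≠ b ∧ IsFactor w (a :: u) ∧ IsFactor w (b :: u)

/-- `u` is a right special factor of `w`. -/
def RightSpecial {A : Type*} (w : ℕ → A) (u : List A) : Prop :=
  ∃ a b : A, a ≠ b ∧ IsFactor w (u ++ [a]) ∧ IsFactor w (u ++ [b])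

/-- `w` is a standard episturmian word: factors closed under reversal and
every left special factor is a prefix. -/
def StdEpisturmian {A : Type*} (w : ℕ → A) : Prop :=
  (∀ u, IsFactor w u → IsFactor w u.reverse) ∧
  (∀ u, LeftSpecial w u → u = pref w u.length)

/-- `w` is an `A`-strict standard episturmian word (standard Arnoux-Rauzy sequence):
standard episturmian and every prefix has every letter as a left extension. -/
def StrictStdEpisturmian {A : Type*} (w : ℕ → A) : Prop :=
  StdEpisturmian w ∧ ∀ (n : ℕ) (a : A), IsFactor w (a :: pref w n)

/-- `w` is episturmian: factors closed under reversal and at most one right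
special factor of each length. -/
def Episturmian {A : Type*} (w : ℕ → A) : Prop :=
  (∀ u, IsFactor w u → IsFactor w u.reverse) ∧
  (∀ u v, RightSpecial w u → RightSpecial w v → u.length = v.length → u = v)

/-- `w` is an `A`-strict episturmian word: it has the same set of factors as some
`A`-strict standard episturmian word. -/
def StrictEpisturmian {A : Type*} (w : ℕ → A) : Prop :=
  ∃ s : ℕ → A, StrictStdEpisturmian s ∧ ∀ u, IsFactor w u ↔ IsFactor s u

/-- `t` is fine: there is an infinite word `s` such that for every total order on the
alphabet and every letter `a` minimal for that order, `min(t) = a·s`. -/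
def Fine {A : Type*} (t : ℕ → A) : Prop :=
  ∃ s : ℕ → A, ∀ (l : LinearOrder A) (a : A), (∀ b, l.le a b) →
    IsMinWord l.lt t (consW a s)

/-!
Both sides amount to strictness plus `LeftBranching`. If a factor `a p x` first leaves `a s` at
`x`, then `min(s) = a s` for every order with least letter `a` forces `s_|p| = a`, since otherwise
some such order puts `x` below `s_|p|`; conversely this is all the lexicographic comparison needs.
A strict standard episturmian word is `LeftBranching` by reversal closure and because its left
special factors are prefixes. Conversely, left special factors of a `LeftBranching` word are
prefixes at once, and closure under reversal goes by induction on the length of the factor: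
`z = s 0` is separating, so `s = Ψ_z(y)` for a derived word `y` that is again `LeftBranching`,
every factor of `s` of length at least 2 lies in `Ψ_z(v) z` for a shorter factor `v` of `y`, and
`(Ψ_z(v) z)ᴿ = Ψ_z(vᴿ) z`.
-/

section

variable {A : Type*}

section Words

def seg (w : ℕ → A) (i m : ℕ) : List A := (List.range m).map (fun j => w (i + j))

@[simp] lemma seg_length (w : ℕ → A) (i m : ℕ) : (seg w i m).length = m := by
  simp [seg]

lemma seg_succ (w : ℕ → A) (i m : ℕ) : seg w i (m + 1) = w i :: seg w (i + 1) m := by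
  simp only [seg, List.range_succ_eq_map, List.map_cons, List.map_map, Function.comp_def,
    Nat.add_zero]
  congr 1
  exact List.map_congr_left fun j _ => by rw [Nat.add_right_comm, Nat.add_assoc]

lemma seg_add (w : ℕ → A) (i m n : ℕ) : seg w i (m + n) = seg w i m ++ seg w (i + m) n := by
  induction m generalizing i with
  | zero => simp [seg]
  | succ m ih =>
    rw [Nat.add_right_comm, seg_succ, seg_succ, ih, List.cons_append,
      show i + 1 + m = i + (m + 1) by omega]

lemma seg_succ_right (w : ℕ → A) (i m : ℕ) : seg w i (m + 1) = seg w i m ++ [w (i + m)] := by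
  rw [seg_add, seg_succ]
  rfl

lemma seg_infix_seg (w : ℕ → A) {i m i' m' : ℕ} (hi : i ≤ i') (hm : i' + m' ≤ i + m) :
    seg w i' m' <:+: seg w i m := by
  obtain ⟨p, rfl⟩ := Nat.exists_eq_add_of_le hi
  obtain ⟨q, hq⟩ := Nat.exists_eq_add_of_le hm
  refine ⟨seg w i p, seg w (i + p + m') q, ?_⟩
  rw [show m = p + (m' + q) by omega, seg_add, seg_add, List.append_assoc]

lemma pref_eq_seg (w : ℕ → A) (k : ℕ) : pref w k = seg w 0 k := by
  simp [pref, seg]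

@[simp] lemma pref_length (w : ℕ → A) (k : ℕ) : (pref w k).length = k := by
  simp [pref]

lemma pref_succ (w : ℕ → A) (k : ℕ) : pref w (k + 1) = pref w k ++ [w k] := by
  simp [pref, List.range_succ]

lemma pref_consW_succ (a : A) (s : ℕ → A) (k : ℕ) :
    pref (consW a s) (k + 1) = a :: pref s k := by
  simp [pref, List.range_succ_eq_map, Function.comp_def, consW]

lemma pref_eq_append_cons {s : ℕ → A} {k : ℕ} {r t : List A} {y : A}
    (h : pref s k = r ++ y :: t) : r = pref s r.length ∧ y = s r.length := by
  have hk : r.length + 1 ≤ k := by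
    have := congrArg List.length h
    simp only [pref_length, List.length_append, List.length_cons] at this
    omega
  have htake := congrArg (List.take (r.length + 1)) h
  rw [pref, ← List.map_take, List.take_range, Nat.min_eq_left hk, ← pref, pref_succ,
    List.take_append, List.take_of_length_le (by simp)] at htake
  simpa [eq_comm] using htake

lemma isFactor_seg (w : ℕ → A) (i m : ℕ) : IsFactor w (seg w i m) :=
  ⟨i, by rw [seg_length]; rfl⟩

lemma isFactor_pref (w : ℕ → A) (k : ℕ) : IsFactor w (pref w k) := by
  rw [pref_eq_seg]; exact isFactor_seg w 0 k

lemma IsFactor.exists_eq_seg {w : ℕ → A} {u : List A} (hu : IsFactor w u) :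
    ∃ i, u = seg w i u.length := hu

lemma IsFactor.of_infix {w : ℕ → A} {u v : List A} (hv : IsFactor w v) (h : u <:+: v) :
    IsFactor w u := by
  obtain ⟨i, hi⟩ := hv.exists_eq_seg
  obtain ⟨t, t', rfl⟩ := h
  rw [List.length_append, List.length_append, seg_add, seg_add] at hi
  obtain ⟨-, hu⟩ := List.append_inj (List.append_inj hi.symm (by simp)).1 (by simp)
  exact hu ▸ isFactor_seg w _ _

end Words

section Lex

lemma List.eq_or_exists_first_mismatch {u v : List A} (h : u.length = v.length) :
    u = v ∨
      ∃ (r u' v' : List A) (x y : A), x ≠ y ∧ u = r ++ x :: u' ∧ v = r ++ y :: v' := by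
  induction u generalizing v with
  | nil => exact .inl (List.length_eq_zero_iff.mp h.symm).symm
  | cons x u ih =>
    obtain _ | ⟨y, v⟩ := v
    · simp at h
    by_cases hxy : x = y
    · subst hxy
      rcases ih (Nat.succ.inj h) with rfl | ⟨r, u', v', x', y', hne, rfl, rfl⟩
      · exact .inl rfl
      · exact .inr ⟨x :: r, u', v', x', y', hne, rfl, rfl⟩
    · exact .inr ⟨[], u, v, x, y, hxy, rfl, rfl⟩

lemma List.lex_append_cons_iff {r : A → A → Prop} (hr : ∀ a, ¬ r a a) {p u v : List A}
    {x y : A} (hxy : x ≠ y) : List.Lex r (p ++ x :: u) (p ++ y :: v) ↔ r x y := by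
  induction p with
  | nil => simp [List.cons_lex_cons_iff, hxy]
  | cons c p ih => simp [List.cons_lex_cons_iff, hr, ih]

end Lex

section Orders

noncomputable abbrev rankOrder (f : A → ℕ) : LinearOrder A :=
  let _ := IsWellOrder.linearOrder (WellOrderingRel : A → A → Prop)
  LinearOrder.lift' (fun t => toLex (f t, t)) fun _ _ h => congrArg Prod.snd (toLex.injective h)

lemma rankOrder_lt {f : A → ℕ} {x y : A} (h : f x < f y) : (rankOrder f).lt x y := by
  let _ := IsWellOrder.linearOrder (WellOrderingRel : A → A → Prop)
  show (toLex (f x, x) : Lex (ℕ × A)) < toLex (f y, y)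
  exact Prod.Lex.toLex_lt_toLex.mpr (.inl h)

open Classical in
noncomputable abbrev pinnedOrder (a x : A) : LinearOrder A :=
  rankOrder fun t => if t = a then 0 else if t = x then 1 else 2

lemma pinnedOrder_bot (a x b : A) : (pinnedOrder a x).le a b := by
  classical
  let _ := pinnedOrder a x
  rcases eq_or_ne b a with rfl | hb
  · exact le_rfl
  · refine le_of_lt (rankOrder_lt ?_)
    simp only [if_neg hb]
    split_ifs <;> norm_num

lemma pinnedOrder_lt {a x y : A} (hya : y ≠ a) (hxy : x ≠ y) : (pinnedOrder a x).lt x y := by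
  classical
  refine rankOrder_lt ?_
  simp only [if_neg hya, if_neg hxy.symm]
  split_ifs <;> norm_num

end Orders

/-- A factor `a p x`, with `p` a prefix of `s`, can leave `s` at `x` only if `a` is the letter of
`s` after `p`. -/
def LeftBranching (s : ℕ → A) : Prop :=
  ∀ (a x : A) (j : ℕ), IsFactor s (a :: (pref s j ++ [x])) → x ≠ s j → s j = a

section MinWord

variable {s : ℕ → A}

lemma LeftBranching.eq_of_mismatch (hB : LeftBranching s) {a x y : A} {k : ℕ}
    {r u v : List A} (hP : pref (consW a s) k = r ++ x :: u) (hv : IsFactor s (r ++ y :: v))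
    (hxy : x ≠ y) : x = a := by
  obtain _ | k := k
  · simp [pref] at hP
  rw [pref_consW_succ] at hP
  obtain _ | ⟨c, r⟩ := r
  · exact (List.cons.inj hP).1.symm
  simp only [List.cons_append, List.cons.injEq] at hP
  obtain ⟨rfl, hP⟩ := hP
  obtain ⟨hr, rfl⟩ := pref_eq_append_cons hP
  rw [hr] at hv
  exact hB a y _ (hv.of_infix ⟨[], v, by simp⟩) hxy.symm

lemma isMinWord_consW_of_leftBranching (hstrict : ∀ n a, IsFactor s (a :: pref s n))
    (hB : LeftBranching s) (l : LinearOrder A) (a : A) (ha : ∀ b, l.le a b) :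
    IsMinWord l.lt s (consW a s) := by
  let _ := l
  intro k
  refine ⟨?_, pref_length _ _, fun v hv hlen => ?_⟩
  · obtain _ | k := k
    · exact ⟨0, rfl⟩
    · rw [pref_consW_succ]; exact hstrict k a
  rcases List.eq_or_exists_first_mismatch (u := pref (consW a s) k) (v := v) (by simp [hlen])
    with h | ⟨r, u', v', x, y, hxy, hP, rfl⟩
  · exact .inl h
  right
  have hxa := hB.eq_of_mismatch hP hv hxy
  rw [hP, List.lex_append_cons_iff (fun t => (lt_irrefl t : ¬ l.lt t t)) hxy, hxa]
  exact lt_of_le_of_ne (ha y) (hxa ▸ hxy)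

lemma leftBranching_of_isMinWord
    (hM : ∀ (l : LinearOrder A) (a : A), (∀ b, l.le a b) → IsMinWord l.lt s (consW a s)) :
    LeftBranching s := by
  intro a x j hv hx
  by_contra hja
  let l := pinnedOrder a x
  have hmin := (hM l a (pinnedOrder_bot a x) (j + 2)).2.2 _ hv (by simp)
  rw [pref_consW_succ, pref_succ, ← List.cons_append, ← List.cons_append] at hmin
  rcases hmin with h | h
  · exact hx (List.singleton_inj.mp (List.append_inj' h rfl).2).symm
  · rw [List.lex_append_cons_iff (fun t => (lt_irrefl t : ¬ l.lt t t)) (Ne.symm hx)] at h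
    exact lt_asymm h (pinnedOrder_lt hja hx)

lemma forall_isMinWord_consW_iff :
    (∀ (l : LinearOrder A) (a : A), (∀ b, l.le a b) → IsMinWord l.lt s (consW a s)) ↔
      (∀ n a, IsFactor s (a :: pref s n)) ∧ LeftBranching s := by
  refine ⟨fun hM => ⟨fun n a => ?_, leftBranching_of_isMinWord hM⟩,
    fun ⟨hstrict, hB⟩ => isMinWord_consW_of_leftBranching hstrict hB⟩
  simpa [pref_consW_succ] using (hM (pinnedOrder a a) a (pinnedOrder_bot a a) (n + 1)).1

end MinWord

section Episturmian

variable {s : ℕ → A}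

lemma StrictStdEpisturmian.leftBranching (hS : StrictStdEpisturmian s) : LeftBranching s := by
  obtain ⟨⟨hrev, hls⟩, hstrict⟩ := hS
  intro a x j hf hx
  have hpx : IsFactor s (x :: (pref s j).reverse) := by
    simpa using hrev _ (hf.of_infix (List.suffix_cons a _).isInfix)
  have hps : IsFactor s (s j :: (pref s j).reverse) := by
    simpa [pref_succ] using hrev _ (isFactor_pref s (j + 1))
  have hpal : (pref s j).reverse = pref s j := by
    simpa using hls _ ⟨x, s j, hx, hpx, hps⟩
  -- As `pref s j` is a palindrome, `pref s j ++ [x]` is left special via `s j`, and via `a`.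
  by_contra hja
  have hspx : IsFactor s (s j :: (pref s j ++ [x])) := by
    simpa [pref_succ, hpal] using hrev _ (hstrict (j + 1) x)
  have := hls _ ⟨a, s j, Ne.symm hja, hf, hspx⟩
  rw [List.length_append, List.length_singleton, pref_length, pref_succ] at this
  exact hx (List.singleton_inj.mp (List.append_inj' this rfl).2)

lemma LeftBranching.eq_pref_of_leftSpecial (hB : LeftBranching s) {u : List A}
    (hu : LeftSpecial s u) : u = pref s u.length := by
  obtain ⟨c, d, hcd, hc, hd⟩ := hu
  rcases List.eq_or_exists_first_mismatch (u := u) (v := pref s u.length) (by simp)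
    with h | ⟨r, u', p', x, y, hxy, rfl, hp⟩
  · exact h
  obtain ⟨hr, rfl⟩ := pref_eq_append_cons hp
  have hext : ∀ e, IsFactor s (e :: (r ++ x :: u')) → s r.length = e := fun e he =>
    hB e x r.length (hr ▸ he.of_infix ⟨[], u', by simp⟩) hxy
  exact absurd ((hext c hc).symm.trans (hext d hd)) hcd

lemma LeftBranching.separating (hB : LeftBranching s) : Separating (s 0) s := by
  intro u hu hlen
  obtain ⟨x, w, rfl⟩ := List.length_eq_two.mp hlen
  by_cases hw : w = s 0
  · simp [hw]
  · simp [hB x w 0 (by simpa [pref] using hu) hw]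

lemma Separating.succ_eq {z : A} (hsep : Separating z s) {i : ℕ} (hi : s i ≠ z) :
    s (i + 1) = z := by
  have hseg : seg s i 2 = [s i, s (i + 1)] := by simp [seg, List.range_succ]
  have := hsep _ (isFactor_seg s i 2) (seg_length s i 2)
  rw [hseg, List.mem_pair] at this
  exact (this.resolve_left (Ne.symm hi)).symm

end Episturmian

section Derived

variable [DecidableEq A]

section Psi

variable (z : A)

lemma psiL_append (u v : List A) : psiL z (u ++ v) = psiL z u ++ psiL z v := by
  simp [psiL]

lemma psiL_cons (c : A) (v : List A) : psiL z (c :: v) = psiL z [c] ++ psiL z v :=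
  psiL_append z [c] v

lemma psiL_singleton (c : A) : psiL z [c] = if c = z then [z] else [z, c] := by
  simp [psiL]

lemma suffix_psiL_singleton (c : A) : [c] <:+ psiL z [c] := by
  rw [psiL_singleton]
  split_ifs with hc
  · exact hc ▸ List.suffix_refl _
  · exact List.suffix_cons z _

lemma prefix_psiL_singleton_append (c : A) : [z, c] <+: psiL z [c] ++ [z] := by
  rw [psiL_singleton]
  split_ifs with hc
  · exact hc ▸ List.prefix_refl _
  · exact List.prefix_append _ _

lemma reverse_psiL_append_singleton (v : List A) :
    (psiL z v ++ [z]).reverse = psiL z v.reverse ++ [z] := by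
  induction v with
  | nil => simp [psiL]
  | cons c v ih =>
    rw [psiL_cons, List.reverse_cons, psiL_append, List.append_assoc, List.reverse_append, ih,
      psiL_singleton]
    split_ifs <;> simp

end Psi

variable (s : ℕ → A) (z : A)

/-- Start of the `n`-th block of `s` when `s` is cut into blocks `z` and `z x` (`x ≠ z`). -/
def blockStart : ℕ → ℕ
  | 0 => 0
  | n + 1 => if s (blockStart n + 1) = z then blockStart n + 1 else blockStart n + 2

/-- The derived word: `s = Ψ_z (derivedWord s z)` when `z = s 0` is separating. -/
def derivedWord (n : ℕ) : A := s (blockStart s z n + 1)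

lemma blockStart_strictMono : StrictMono (blockStart s z) :=
  strictMono_nat_of_lt_succ fun n => by rw [blockStart]; split_ifs <;> omega

lemma exists_blockStart_le_lt (i : ℕ) :
    ∃ n, blockStart s z n ≤ i ∧ i < blockStart s z (n + 1) := by
  induction i with
  | zero => exact ⟨0, le_rfl, blockStart_strictMono s z Nat.zero_lt_one⟩
  | succ i ih =>
    obtain ⟨n, hn, hi⟩ := ih
    rcases Nat.lt_or_ge (i + 1) (blockStart s z (n + 1)) with h | h
    · exact ⟨n, by omega, h⟩
    · have := blockStart_strictMono s z (Nat.lt_add_one (n + 1))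
      exact ⟨n + 1, h, by omega⟩

variable {s z} (hz : s 0 = z) (hsep : Separating z s)
include hz hsep

lemma apply_blockStart (n : ℕ) : s (blockStart s z n) = z := by
  induction n with
  | zero => exact hz
  | succ n ih =>
    rw [blockStart]
    split_ifs with h
    · exact h
    · exact hsep.succ_eq h

lemma psiL_singleton_derivedWord (n : ℕ) :
    psiL z [derivedWord s z n] =
      seg s (blockStart s z n) (blockStart s z (n + 1) - blockStart s z n) := by
  rw [psiL_singleton, derivedWord, blockStart]
  split_ifs with h
  · simp [seg, apply_blockStart hz hsep]
  · simp [seg, List.range_succ, apply_blockStart hz hsep]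

lemma psiL_seg_derivedWord (n j : ℕ) :
    psiL z (seg (derivedWord s z) n j) =
      seg s (blockStart s z n) (blockStart s z (n + j) - blockStart s z n) := by
  induction j generalizing n with
  | zero => simp [seg, psiL]
  | succ j ih =>
    have h1 := blockStart_strictMono s z (Nat.lt_add_one n)
    have h2 := (blockStart_strictMono s z).monotone (Nat.le_add_right (n + 1) j)
    rw [seg_succ, psiL_cons, psiL_singleton_derivedWord hz hsep, ih, ← Nat.add_assoc,
      Nat.add_right_comm n j 1, show blockStart s z (n + 1 + j) - blockStart s z n =
        (blockStart s z (n + 1) - blockStart s z n) +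
          (blockStart s z (n + 1 + j) - blockStart s z (n + 1)) by omega,
      seg_add, Nat.add_sub_cancel' h1.le]

lemma psiL_seg_derivedWord_append (n j : ℕ) :
    psiL z (seg (derivedWord s z) n j) ++ [z] =
      seg s (blockStart s z n) (blockStart s z (n + j) - blockStart s z n + 1) := by
  rw [psiL_seg_derivedWord hz hsep, seg_succ_right,
    Nat.add_sub_cancel' ((blockStart_strictMono s z).monotone (Nat.le_add_right n j)),
    apply_blockStart hz hsep]

lemma psiL_pref_derivedWord (j : ℕ) :
    psiL z (pref (derivedWord s z) j) = pref s (blockStart s z j) := by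
  rw [pref_eq_seg, psiL_seg_derivedWord hz hsep, pref_eq_seg, Nat.zero_add]
  rfl

lemma isFactor_psiL_append_of_derivedWord {v : List A} (hv : IsFactor (derivedWord s z) v) :
    IsFactor s (psiL z v ++ [z]) := by
  obtain ⟨n, hn⟩ := hv.exists_eq_seg
  rw [hn, psiL_seg_derivedWord_append hz hsep]
  exact isFactor_seg s _ _

lemma exists_derivedWord_factor_infix {u : List A} (hu : IsFactor s u) (hlen : 2 ≤ u.length) :
    ∃ v, IsFactor (derivedWord s z) v ∧ v.length < u.length ∧ u <:+: psiL z v ++ [z] := by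
  obtain ⟨i, hi⟩ := hu.exists_eq_seg
  obtain ⟨n, hni, hin⟩ := exists_blockStart_le_lt s z i
  refine ⟨seg (derivedWord s z) n (u.length - 1), isFactor_seg _ _ _, by simp; omega, ?_⟩
  have hgrowth := (blockStart_strictMono s z).add_le_nat (u.length - 2) (n + 1)
  rw [show u.length - 2 + (n + 1) = n + (u.length - 1) by omega] at hgrowth
  rw [psiL_seg_derivedWord_append hz hsep]
  nth_rw 1 [hi]
  exact seg_infix_seg s hni (by omega)

end Derived

section Reversal

variable {s : ℕ → A}

lemma leftBranching_derivedWord [DecidableEq A] (hB : LeftBranching s) :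
    LeftBranching (derivedWord s (s 0)) := by
  intro a x j hf hx
  -- `Ψ_z (a :: (pref y j ++ [x])) ++ [z]` contains `a :: (pref s (blockStart j) ++ [z, x])`.
  have hsj : derivedWord s (s 0) j = s (blockStart s (s 0) j + 1) := rfl
  have hs := isFactor_psiL_append_of_derivedWord rfl hB.separating hf
  rw [psiL_cons, psiL_append, psiL_pref_derivedWord rfl hB.separating, List.append_assoc,
    List.append_assoc] at hs
  obtain ⟨t₁, ht₁⟩ := suffix_psiL_singleton (s 0) a
  obtain ⟨t₂, ht₂⟩ := prefix_psiL_singleton_append (s 0) x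
  rw [← ht₁, ← ht₂] at hs
  have hinf : a :: (pref s (blockStart s (s 0) j + 1) ++ [x]) <:+:
      t₁ ++ [a] ++ (pref s (blockStart s (s 0) j) ++ ([s 0, x] ++ t₂)) := by
    refine ⟨t₁, t₂, ?_⟩
    rw [pref_succ, apply_blockStart rfl hB.separating]
    simp
  rw [hsj]
  exact hB a x _ (hs.of_infix hinf) (hsj ▸ hx)

lemma LeftBranching.isFactor_reverse (hB : LeftBranching s) {u : List A}
    (hu : IsFactor s u) : IsFactor s u.reverse := by
  classical
  induction hn : u.length using Nat.strong_induction_on generalizing s u with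
  | _ n ih =>
  rcases Nat.lt_or_ge u.length 2 with hlt | hge
  · obtain _ | ⟨c, _ | ⟨d, t⟩⟩ := u
    · exact hu
    · exact hu
    · simp at hlt
  obtain ⟨v, hv, hvlen, hinf⟩ := exists_derivedWord_factor_infix rfl hB.separating hu hge
  have hvrev := ih v.length (hn ▸ hvlen) (leftBranching_derivedWord hB) hv rfl
  refine (isFactor_psiL_append_of_derivedWord rfl hB.separating hvrev).of_infix ?_
  rw [← reverse_psiL_append_singleton]
  exact List.reverse_infix.mpr hinf

end Reversal

end

theorem stmt_7_general {A : Type*} (s : ℕ → A) :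
    StrictStdEpisturmian s ↔
      ∀ (l : LinearOrder A) (a : A), (∀ b, l.le a b) → IsMinWord l.lt s (consW a s) := by
  rw [forall_isMinWord_consW_iff]
  refine ⟨fun hS => ⟨hS.2, hS.leftBranching⟩, fun ⟨hstrict, hB⟩ => ⟨⟨?_, ?_⟩, hstrict⟩⟩
  · exact fun _ => hB.isFactor_reverse
  · exact fun _ => hB.eq_pref_of_leftSpecial

/-- `s` is a standard Arnoux-Rauzy sequence iff `a·s = min(s)` for every letter `a`
and every order making `a` minimal. -/
theorem stmt_7 {A : Type*} [Fintype A] (s : ℕ → A) :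
    StrictStdEpisturmian s ↔
      ∀ (l : LinearOrder A) (a : A), (∀ b, l.le a b) → IsMinWord l.lt s (consW a s) :=
  stmt_7_general s
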